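/- Let ν be a partition, fix an addable corner of ν at position (α,β) (row α, column β), so its weight is A = t^α·q^β, and let μ = ν together with that cell. Then in ℚ(q,t): ∏_{s∈R_{μν}} (q^{a_ν(s)}−t^{l_ν(s)+1})/(q^{a_μ(s)}−t^{l_μ(s)+1}) = q^{−β} · ∏_{R}(A − qt·R) / ∏_{A'}(A − A'), where the numerator product runs over the weights R of the removable corners of ν whose column index is strictly less than β, the denominator product runs over the weights A' of the addable corners of ν whose column index is strictly less than β, and these two sets of corners have equal cardinality. -/

import Mathlib

open scoped Classical
open PowerSeries

noncomputable section

abbrev K := FractionRing (MvPolynomial (Fin 2) ℚ)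

def q : K := algebraMap (MvPolynomial (Fin 2) ℚ) K (MvPolynomial.X 0)
def t : K := algebraMap (MvPolynomial (Fin 2) ℚ) K (MvPolynomial.X 1)

/-- the weight of a cell `(i,j)` (row `i`, column `j`) is `t^i * q^j` -/
def w (c : ℕ × ℕ) : K := t ^ c.1 * q ^ c.2

/-- `B_μ = Σ_{c ∈ μ} w(c)` -/
def Bsum (μ : YoungDiagram) : K := ∑ c ∈ μ.cells, w c

/-- a removable corner: a cell of `μ` whose removal leaves a Young diagram -/
def IsRemovable (μ : YoungDiagram) (c : ℕ × ℕ) : Prop :=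
  c ∈ μ ∧ IsLowerSet (↑(μ.cells.erase c) : Set (ℕ × ℕ))

/-- an addable corner: a cell not in `μ` whose addition gives a Young diagram -/
def IsAddable (μ : YoungDiagram) (c : ℕ × ℕ) : Prop :=
  c ∉ μ ∧ IsLowerSet (↑(insert c μ.cells) : Set (ℕ × ℕ))

/-- the arm of a cell: number of cells of `μ` strictly east of it in its row -/
def arm (μ : YoungDiagram) (c : ℕ × ℕ) : ℕ :=
  (μ.cells.filter fun d => d.1 = c.1 ∧ c.2 < d.2).card

/-- the leg of a cell: number of cells of `μ` strictly north of it in its column -/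
def leg (μ : YoungDiagram) (c : ℕ × ℕ) : ℕ :=
  (μ.cells.filter fun d => d.2 = c.2 ∧ c.1 < d.1).card


/-! Adding `(α, β)` lengthens the arm of each cell `(α, j)`, `j < β`, by one and leaves its leg
alone, so with `ν'` the column lengths of `ν` and `A = t^α q^β` the `j`-th factor of the left side
is `(q^(β-1-j) - t^(ν'_j-α)) / (q^(β-j) - t^(ν'_j-α))`; multiplying numerator and denominator by
`t^α q^(j+1)` turns it into `(A - q t w(ν'_j - 1, j)) / (q (A - w(ν'_j, j)))`.
The columns `j < β` fall into maximal blocks on which `ν'` is constant: the first column of a block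
carries an addable corner of `ν`, the last one a removable corner, and inside a block the numerator
of the `j`-th factor equals the denominator of the `(j+1)`-st. So the product telescopes to the
two corner products (and `q^β` from the extra factors `q`), and the blocks pair up the corners. -/

lemma q_ne_zero : q ≠ 0 :=
  (map_ne_zero_iff _ (IsFractionRing.injective _ K)).mpr (MvPolynomial.X_ne_zero 0)

lemma t_ne_zero : t ≠ 0 :=
  (map_ne_zero_iff _ (IsFractionRing.injective _ K)).mpr (MvPolynomial.X_ne_zero 1)

lemma w_eq_algebraMap_monomial (c : ℕ × ℕ) :
    w c = algebraMap (MvPolynomial (Fin 2) ℚ) K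
      (MvPolynomial.monomial (Finsupp.single 1 c.1 + Finsupp.single 0 c.2) (1 : ℚ)) := by
  rw [← one_mul (1 : ℚ), ← MvPolynomial.monomial_mul, ← MvPolynomial.X_pow_eq_monomial,
    ← MvPolynomial.X_pow_eq_monomial, map_mul, map_pow, map_pow]
  rfl

lemma w_injective : Function.Injective w := by
  intro c d h
  rw [w_eq_algebraMap_monomial, w_eq_algebraMap_monomial] at h
  have hexp := (MvPolynomial.monomial_left_injective one_ne_zero) (IsFractionRing.injective _ K h)
  exact Prod.ext (by simpa using DFunLike.congr_fun hexp 1) (by simpa using DFunLike.congr_fun hexp 0)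

lemma q_mul_t_mul_w (i j : ℕ) : q * t * w (i, j) = w (i + 1, j + 1) := by
  simp only [w]; ring

lemma row_factor_eq (α j d e : ℕ) :
    (q ^ e - t ^ (d + 1)) / (q ^ (e + 1) - t ^ (d + 1)) =
      (w (α, j + e + 1) - q * t * w (α + d, j)) / (q * (w (α, j + e + 1) - w (α + d + 1, j))) := by
  have hc : t ^ α * q ^ (j + 1) ≠ 0 := mul_ne_zero (pow_ne_zero _ t_ne_zero) (pow_ne_zero _ q_ne_zero)
  rw [← mul_div_mul_left _ _ hc]
  simp only [w]
  congr 1 <;> ring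

section LowerSet

variable {ι : Type*} {s : Set ι} {a : ι}

lemma IsLowerSet.isLowerSet_diff_singleton_iff [LE ι] (hs : IsLowerSet s) :
    IsLowerSet (s \ {a}) ↔ ∀ b ∈ s, a ≤ b → b = a := by
  refine ⟨fun h b hb hab => by_contra fun hba => ?_, hs.erase⟩
  exact (h hab ⟨hb, hba⟩).2 rfl

lemma IsLowerSet.isLowerSet_insert_iff [PartialOrder ι] (hs : IsLowerSet s) :
    IsLowerSet (insert a s) ↔ ∀ b < a, b ∈ s := by
  refine ⟨fun h b hba => (h hba.le (Set.mem_insert a s)).resolve_left hba.ne, fun h b c hcb hb => ?_⟩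
  rcases hb with rfl | hb
  · exact hcb.eq_or_lt.imp id (h c)
  · exact Or.inr (hs hcb hb)

end LowerSet

open Finset

section Blocks

variable (L : ℕ → ℕ) (n : ℕ)

def blockEnds : Finset ℕ := (range n).filter fun j => L (j + 1) < L j

def blockStarts : Finset ℕ := (range n).filter fun j => j = 0 ∨ L j < L (j - 1)

variable {L n}

lemma image_succ_filter_not_lt (hlast : ∀ j < n, ¬ L (j + 1) < L j → j + 1 < n) :
    ((range n).filter fun j => ¬ L (j + 1) < L j).image (· + 1) =
      (range n).filter fun j => ¬ (j = 0 ∨ L j < L (j - 1)) := by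
  ext k
  simp only [mem_image, mem_filter, mem_range]
  constructor
  · rintro ⟨j, ⟨hj, hnot⟩, rfl⟩
    exact ⟨hlast j hj hnot, by simpa using hnot⟩
  · rintro ⟨hk, hnot⟩
    refine ⟨k - 1, ⟨by omega, ?_⟩, by omega⟩
    rw [Nat.sub_add_cancel (by omega)]
    exact fun h => hnot (.inr h)

lemma card_blockEnds_eq_card_blockStarts (hlast : ∀ j < n, ¬ L (j + 1) < L j → j + 1 < n) :
    #(blockEnds L n) = #(blockStarts L n) := by
  have hEnds := card_filter_add_card_filter_not (s := range n) fun j => L (j + 1) < L j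
  have hStarts := card_filter_add_card_filter_not (s := range n) fun j => j = 0 ∨ L j < L (j - 1)
  rw [← image_succ_filter_not_lt hlast, card_image_of_injective _ (add_left_injective 1)]
    at hStarts
  rw [blockEnds, blockStarts]
  omega

lemma prod_mul_prod_blockStarts {M : Type*} [CommMonoid M] (G H : ℕ → M)
    (hlast : ∀ j < n, ¬ L (j + 1) < L j → j + 1 < n)
    (hGH : ∀ j < n, ¬ L (j + 1) < L j → G j = H (j + 1)) :
    (∏ j ∈ range n, G j) * ∏ j ∈ blockStarts L n, H j =
      (∏ j ∈ range n, H j) * ∏ j ∈ blockEnds L n, G j := by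
  rw [← prod_filter_mul_prod_filter_not (range n) (fun j => L (j + 1) < L j),
    ← prod_filter_mul_prod_filter_not (range n) (fun j => j = 0 ∨ L j < L (j - 1)),
    ← image_succ_filter_not_lt hlast, prod_image (by simp),
    prod_congr rfl fun j hj => hGH j (mem_range.mp (mem_filter.mp hj).1) (mem_filter.mp hj).2,
    blockStarts, blockEnds]
  ac_rfl

end Blocks

namespace YoungDiagram

variable {μ ν : YoungDiagram}

lemma isRemovable_iff (μ : YoungDiagram) (i j : ℕ) :
    IsRemovable μ (i, j) ↔ μ.colLen (j + 1) < μ.colLen j ∧ i + 1 = μ.colLen j := by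
  rw [IsRemovable, Finset.coe_erase, μ.isLowerSet.isLowerSet_diff_singleton_iff]
  simp only [Finset.mem_coe, mem_cells, Prod.forall, Prod.mk_le_mk, Prod.mk.injEq, mem_iff_lt_colLen]
  have := μ.colLen_anti j (j + 1) j.le_succ
  constructor
  · rintro ⟨hij, hmax⟩
    have hup := hmax (i + 1) j
    have hright := hmax i (j + 1)
    omega
  · rintro ⟨hdesc, hlen⟩
    refine ⟨by omega, fun a b hab hle => ?_⟩
    obtain rfl | hb := hle.2.eq_or_lt
    · omega
    · have := μ.colLen_anti (j + 1) b hb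
      omega

lemma isAddable_iff (μ : YoungDiagram) (i j : ℕ) :
    IsAddable μ (i, j) ↔ μ.colLen j = i ∧ (j = 0 ∨ i < μ.colLen (j - 1)) := by
  rw [IsAddable, Finset.coe_insert, μ.isLowerSet.isLowerSet_insert_iff]
  simp only [Finset.mem_coe, mem_cells, Prod.forall, Prod.mk_lt_mk, mem_iff_lt_colLen]
  constructor
  · rintro ⟨hij, hlt⟩
    have hbelow := hlt (i - 1) j
    have hleft := hlt i (j - 1)
    omega
  · rintro ⟨hlen, hleft⟩
    refine ⟨by omega, fun a b hab => ?_⟩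
    obtain hb | hb := eq_or_lt_of_le (show b ≤ j by omega)
    · subst hb; omega
    · have := μ.colLen_anti b (j - 1) (by omega)
      omega

lemma arm_eq (μ : YoungDiagram) (i j : ℕ) : arm μ (i, j) = μ.rowLen i - (j + 1) := by
  have : μ.cells.filter (fun d => d.1 = i ∧ j < d.2) = (Ioo j (μ.rowLen i)).map
      ⟨(i, ·), Prod.mk_right_injective i⟩ := by
    ext ⟨a, b⟩
    simp only [mem_filter, mem_cells, mem_map, mem_Ioo, Function.Embedding.coeFn_mk, Prod.mk.injEq]
    constructor
    · rintro ⟨h, rfl, hb⟩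
      exact ⟨b, ⟨hb, mem_iff_lt_rowLen.mp h⟩, rfl, rfl⟩
    · rintro ⟨b, ⟨hb, hlt⟩, rfl, rfl⟩
      exact ⟨mem_iff_lt_rowLen.mpr hlt, rfl, hb⟩
  rw [arm, this, card_map, Nat.card_Ioo]
  omega

lemma leg_eq (μ : YoungDiagram) (i j : ℕ) : leg μ (i, j) = μ.colLen j - (i + 1) := by
  have : μ.cells.filter (fun d => d.2 = j ∧ i < d.1) = (Ioo i (μ.colLen j)).map
      ⟨(·, j), Prod.mk_left_injective j⟩ := by
    ext ⟨a, b⟩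
    simp only [mem_filter, mem_cells, mem_map, mem_Ioo, Function.Embedding.coeFn_mk, Prod.mk.injEq]
    constructor
    · rintro ⟨h, rfl, ha⟩
      exact ⟨a, ⟨ha, mem_iff_lt_colLen.mp h⟩, rfl, rfl⟩
    · rintro ⟨a, ⟨ha, hlt⟩, rfl, rfl⟩
      exact ⟨mem_iff_lt_colLen.mpr hlt, rfl, ha⟩
  rw [leg, this, card_map, Nat.card_Ioo]
  omega

lemma lt_colLen_iff_of_isAddable {α β : ℕ} (hc : IsAddable ν (α, β)) (j : ℕ) :
    α < ν.colLen j ↔ j < β := by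
  obtain ⟨hβ, hleft⟩ := (ν.isAddable_iff α β).mp hc
  constructor
  · intro h
    by_contra hj
    have := ν.colLen_anti β j (by omega)
    omega
  · intro hj
    have := ν.colLen_anti j (β - 1) (by omega)
    omega

lemma rowLen_eq_of_isAddable {α β : ℕ} (hc : IsAddable ν (α, β)) : ν.rowLen α = β :=
  eq_of_forall_lt_iff fun j => by
    rw [← mem_iff_lt_rowLen, mem_iff_lt_colLen, lt_colLen_iff_of_isAddable hc]

lemma mem_iff_of_cells_eq_insert {c : ℕ × ℕ} (hμ : μ.cells = insert c ν.cells) (x : ℕ × ℕ) :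
    x ∈ μ ↔ x = c ∨ x ∈ ν := by
  rw [← mem_cells, hμ, mem_insert, mem_cells]

lemma rowLen_eq_succ_of_cells_eq_insert {α β : ℕ} (hc : IsAddable ν (α, β))
    (hμ : μ.cells = insert (α, β) ν.cells) : μ.rowLen α = β + 1 :=
  eq_of_forall_lt_iff fun j => by
    rw [← mem_iff_lt_rowLen, mem_iff_of_cells_eq_insert hμ, mem_iff_lt_rowLen,
      rowLen_eq_of_isAddable hc, Prod.mk.injEq]
    omega

lemma colLen_eq_of_cells_eq_insert {α β j : ℕ} (hμ : μ.cells = insert (α, β) ν.cells)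
    (hj : j ≠ β) : μ.colLen j = ν.colLen j :=
  eq_of_forall_lt_iff fun i => by
    rw [← mem_iff_lt_colLen, ← mem_iff_lt_colLen, mem_iff_of_cells_eq_insert hμ, Prod.mk.injEq]
    tauto

lemma succ_lt_of_isAddable {α β : ℕ} (hc : IsAddable ν (α, β)) (j : ℕ) (hj : j < β)
    (hflat : ¬ ν.colLen (j + 1) < ν.colLen j) : j + 1 < β := by
  by_contra hβ
  have := (lt_colLen_iff_of_isAddable hc (j + 1)).not.mpr hβ
  have := (lt_colLen_iff_of_isAddable hc j).mpr hj
  omega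

lemma filter_removable_eq_image {Rem : Finset (ℕ × ℕ)} (hRem : ∀ x, x ∈ Rem ↔ IsRemovable ν x)
    (β : ℕ) :
    Rem.filter (fun r => r.2 < β) = (blockEnds ν.colLen β).image fun j => (ν.colLen j - 1, j) := by
  ext ⟨i, j⟩
  simp only [mem_filter, hRem, isRemovable_iff, blockEnds, mem_image, mem_range, Prod.mk.injEq,
    exists_eq_right_right]
  omega

lemma filter_addable_eq_image {Add : Finset (ℕ × ℕ)} (hAdd : ∀ x, x ∈ Add ↔ IsAddable ν x)
    (β : ℕ) :
    Add.filter (fun a => a.2 < β) = (blockStarts ν.colLen β).image fun j => (ν.colLen j, j) := by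
  ext ⟨i, j⟩
  simp only [mem_filter, hAdd, isAddable_iff, blockStarts, mem_image, mem_range, Prod.mk.injEq,
    exists_eq_right_right]
  omega

lemma prod_row_eq {α β : ℕ} (hc : IsAddable ν (α, β)) (hμ : μ.cells = insert (α, β) ν.cells) :
    ∏ s ∈ ν.cells.filter (fun s => s.1 = α),
        (q ^ arm ν s - t ^ (leg ν s + 1)) / (q ^ arm μ s - t ^ (leg μ s + 1)) =
      ∏ j ∈ range β,
        (w (α, β) - q * t * w (ν.colLen j - 1, j)) / (q * (w (α, β) - w (ν.colLen j, j))) := by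
  rw [show ν.cells.filter (fun s => s.1 = α) = ν.row α from rfl, row_eq_prod,
    rowLen_eq_of_isAddable hc, prod_product, prod_singleton]
  refine prod_congr rfl fun j hj => ?_
  rw [mem_range] at hj
  rw [arm_eq, arm_eq, leg_eq, leg_eq, rowLen_eq_of_isAddable hc,
    rowLen_eq_succ_of_cells_eq_insert hc hμ, colLen_eq_of_cells_eq_insert hμ hj.ne]
  obtain ⟨d, hd⟩ := Nat.exists_eq_add_of_lt ((lt_colLen_iff_of_isAddable hc j).mpr hj)
  obtain ⟨e, rfl⟩ := Nat.exists_eq_add_of_lt hj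
  rw [hd, show α + d + 1 - 1 = α + d by omega, show α + d + 1 - (α + 1) = d by omega,
    show j + e + 1 - (j + 1) = e by omega, show j + e + 1 + 1 - (j + 1) = e + 1 by omega]
  exact row_factor_eq α j d e

end YoungDiagram

open YoungDiagram

/-- the row-product part of the Pieri coefficient `d_{μν}` in terms of the
corners of `ν` with column index strictly less than that of the added cell. -/
theorem stmt_3 (ν : YoungDiagram) (Rem Add : Finset (ℕ × ℕ))
    (hRem : ∀ x, x ∈ Rem ↔ IsRemovable ν x)
    (hAdd : ∀ x, x ∈ Add ↔ IsAddable ν x)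
    (α β : ℕ) (hc : IsAddable ν (α, β))
    (μ : YoungDiagram) (hμ : μ.cells = insert (α, β) ν.cells) :
    (Rem.filter fun r => r.2 < β).card = (Add.filter fun a => a.2 < β).card ∧
    (∏ s ∈ ν.cells.filter (fun s => s.1 = α),
        (q ^ arm ν s - t ^ (leg ν s + 1)) / (q ^ arm μ s - t ^ (leg μ s + 1))) =
      (q ^ β)⁻¹ *
        (∏ r ∈ Rem.filter (fun r => r.2 < β), (w (α, β) - q * t * w r)) /
        (∏ a ∈ Add.filter (fun a => a.2 < β), (w (α, β) - w a)) := by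
  have hlast := succ_lt_of_isAddable hc
  have hshift : ∀ j < β, ¬ ν.colLen (j + 1) < ν.colLen j →
      w (α, β) - q * t * w (ν.colLen j - 1, j) = w (α, β) - w (ν.colLen (j + 1), j + 1) := by
    intro j hj hflat
    have := (lt_colLen_iff_of_isAddable hc j).mpr hj
    have := ν.colLen_anti j (j + 1) j.le_succ
    rw [q_mul_t_mul_w, show ν.colLen j - 1 + 1 = ν.colLen (j + 1) by omega]
  have hne : ∀ j < β, w (α, β) - w (ν.colLen j, j) ≠ 0 := fun j hj =>
    sub_ne_zero.mpr (w_injective.ne (by simp [hj.ne']))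
  have hinj : ∀ f : ℕ → ℕ, Function.Injective fun j => (f j, j) := fun f _ _ h => congrArg Prod.snd h
  rw [filter_removable_eq_image hRem, filter_addable_eq_image hAdd,
    card_image_of_injective _ (hinj _), card_image_of_injective _ (hinj _),
    prod_image (hinj (ν.colLen · - 1)).injOn, prod_image (hinj ν.colLen).injOn, prod_row_eq hc hμ]
  refine ⟨card_blockEnds_eq_card_blockStarts hlast, ?_⟩
  have key := prod_mul_prod_blockStarts (fun j => w (α, β) - q * t * w (ν.colLen j - 1, j))
    (fun j => w (α, β) - w (ν.colLen j, j)) hlast hshift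
  have hH : ∏ j ∈ range β, (w (α, β) - w (ν.colLen j, j)) ≠ 0 :=
    prod_ne_zero_iff.mpr fun j hj => hne j (mem_range.mp hj)
  have hHs : ∏ j ∈ blockStarts ν.colLen β, (w (α, β) - w (ν.colLen j, j)) ≠ 0 :=
    prod_ne_zero_iff.mpr fun j hj => hne j (mem_range.mp (mem_filter.mp hj).1)
  rw [prod_div_distrib, prod_mul_distrib, prod_const, card_range]
  field_simp [q_ne_zero]
  linear_combination key
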